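/- arXiv:math/9504223 — 3 statements merged into one kernel-verified Lean document; each statement's English description precedes it below -/
import Mathlib

section
/- Let F be a quadratic form on ℝⁿ with real symmetric coefficient matrix. F is rational (i.e., equals a nonzero real scalar multiple of a form with rational coefficients) if and only if F(x)/F(y) ∈ ℚ for all x, y ∈ ℚⁿ with F(y) ≠ 0, provided F does not vanish identically on ℚⁿ. -/
/-!
If `M = c • M₀` with `M₀` rational, every value of `F` at a rational point is `c` times a rational
number, so ratios of nonzero values are rational. Conversely, fix a rational `y` with
`c := F(y) ≠ 0`; then `F(z) ∈ ℚ c` for every rational `z`, and polarization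
`2 Mᵢⱼ = F(eᵢ + eⱼ) - F(eᵢ) - F(eⱼ)` recovers every entry of the symmetric matrix `M`
from values of `F` at rational points, so `M ∈ c • Mₙ(ℚ)`.
-/

open Matrix

variable {ι K : Type*}

namespace Matrix

lemma ratCast_single_one [DivisionRing K] [DecidableEq ι] (i : ι) :
    (fun k => ((Pi.single i 1 : ι → ℚ) k : K)) = Pi.single i 1 := by
  ext k
  simp [Pi.single_apply, apply_ite]

variable [Fintype ι]

lemma ratCast_dotProduct_mulVec_map [DivisionRing K] [CharZero K] (M : Matrix ι ι ℚ)
    (x : ι → ℚ) :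
    (fun i => (x i : K)) ⬝ᵥ M.map (fun q => (q : K)) *ᵥ (fun i => (x i : K)) =
      ((x ⬝ᵥ M *ᵥ x : ℚ) : K) := by
  simp [dotProduct, mulVec]

lemma single_one_dotProduct_mulVec_single_one [CommSemiring K] [DecidableEq ι]
    (M : Matrix ι ι K) (i j : ι) :
    Pi.single i 1 ⬝ᵥ M *ᵥ Pi.single j 1 = M i j := by
  rw [mulVec_single_one, single_one_dotProduct, col_apply]

lemma IsSymm.dotProduct_mulVec_single_add_single [CommRing K] [DecidableEq ι]
    {M : Matrix ι ι K} (hM : M.IsSymm) (i j : ι) :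
    (Pi.single i 1 + Pi.single j 1) ⬝ᵥ M *ᵥ (Pi.single i 1 + Pi.single j 1) =
      M i i + M j j + 2 * M i j := by
  simp only [mulVec_add, dotProduct_add, add_dotProduct,
    single_one_dotProduct_mulVec_single_one, hM.apply]
  ring

theorem IsSymm.exists_eq_smul_map_ratCast [Field K] [CharZero K] {M : Matrix ι ι K}
    (hM : M.IsSymm) {c : K}
    (h : ∀ z : ι → ℚ, ∃ q : ℚ, (fun i => (z i : K)) ⬝ᵥ M *ᵥ (fun i => (z i : K)) = q * c) :
    ∃ M₀ : Matrix ι ι ℚ, M = c • M₀.map (fun q => (q : K)) := by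
  classical
  choose q hq using h
  let e : ι → ι → ℚ := fun i => Pi.single i 1
  refine ⟨of fun i j => (q (e i + e j) - q (e i) - q (e j)) / 2, ?_⟩
  ext i j
  have hij := hq (e i + e j)
  have hii := hq (e i)
  have hjj := hq (e j)
  simp only [e, Pi.add_apply, Rat.cast_add] at hij hii hjj
  rw [← Pi.add_def, ratCast_single_one, ratCast_single_one,
    hM.dotProduct_mulVec_single_add_single] at hij
  rw [ratCast_single_one, single_one_dotProduct_mulVec_single_one] at hii hjj
  simp only [smul_apply, map_apply, of_apply, smul_eq_mul, e]
  push_cast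
  linear_combination hij / 2 - hii / 2 - hjj / 2

end Matrix

theorem stmt_3_general (n : ℕ) (M : Matrix (Fin n) (Fin n) ℝ) (hsym : M.IsSymm)
    (hnonvanish : ∃ y : Fin n → ℚ,
      (fun i => (y i : ℝ)) ⬝ᵥ M.mulVec (fun i => (y i : ℝ)) ≠ 0) :
    (∃ (c : ℝ) (M₀ : Matrix (Fin n) (Fin n) ℚ), c ≠ 0 ∧ M = c • M₀.map (fun q => (q : ℝ))) ↔
      (∀ x y : Fin n → ℚ,
        (fun i => (y i : ℝ)) ⬝ᵥ M.mulVec (fun i => (y i : ℝ)) ≠ 0 →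
        ∃ q : ℚ,
          (fun i => (x i : ℝ)) ⬝ᵥ M.mulVec (fun i => (x i : ℝ)) =
            q * ((fun i => (y i : ℝ)) ⬝ᵥ M.mulVec (fun i => (y i : ℝ)))) := by
  constructor
  · rintro ⟨c, M₀, -, rfl⟩ x y hy
    simp only [smul_mulVec, dotProduct_smul, smul_eq_mul, ratCast_dotProduct_mulVec_map] at hy ⊢
    have hy₀ : y ⬝ᵥ M₀ *ᵥ y ≠ 0 := by
      rintro h
      simp [h] at hy
    refine ⟨(x ⬝ᵥ M₀ *ᵥ x) / (y ⬝ᵥ M₀ *ᵥ y), ?_⟩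
    push_cast
    field_simp
  · intro h
    obtain ⟨y, hy⟩ := hnonvanish
    obtain ⟨M₀, hM₀⟩ := hsym.exists_eq_smul_map_ratCast fun z => h z y hy
    exact ⟨_, M₀, hy, hM₀⟩

theorem stmt_3 (n : ℕ) (M : Matrix (Fin n) (Fin n) ℝ) (hsym : M.IsSymm) (hdet : M.det ≠ 0)
    (hnonvanish : ∃ y : Fin n → ℚ,
      (fun i => (y i : ℝ)) ⬝ᵥ M.mulVec (fun i => (y i : ℝ)) ≠ 0) :
    (∃ (c : ℝ) (M₀ : Matrix (Fin n) (Fin n) ℚ), c ≠ 0 ∧ M = c • M₀.map (fun q => (q : ℝ))) ↔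
      (∀ x y : Fin n → ℚ,
        (fun i => (y i : ℝ)) ⬝ᵥ M.mulVec (fun i => (y i : ℝ)) ≠ 0 →
        ∃ q : ℚ,
          (fun i => (x i : ℝ)) ⬝ᵥ M.mulVec (fun i => (x i : ℝ)) =
            q * ((fun i => (y i : ℝ)) ⬝ᵥ M.mulVec (fun i => (y i : ℝ)))) :=
  stmt_3_general n M hsym hnonvanish
end

section
/- Let F be a nondegenerate indefinite quadratic form on ℝⁿ (n ≥ 3) that is irrational. Then there exists a 3-dimensional ℚ-subspace V ⊂ ℚⁿ such that the restriction of F to V ⊗_ℚ ℝ is nondegenerate, indefinite, and irrational. -/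
open Matrix

namespace Stmt7Aux

variable {n : ℕ}

def cv {n : ℕ} (q : Fin n → ℚ) : Fin n → ℝ := fun i => (q i : ℝ)

noncomputable def qB (M : Matrix (Fin n) (Fin n) ℝ) (x y : Fin n → ℝ) : ℝ := x ⬝ᵥ M.mulVec y

lemma qB_add_right (M : Matrix (Fin n) (Fin n) ℝ) (x y z : Fin n → ℝ) :
    qB M x (y + z) = qB M x y + qB M x z := by
  simp [qB, Matrix.mulVec_add, dotProduct_add]

lemma qB_smul_right (M : Matrix (Fin n) (Fin n) ℝ) (t : ℝ) (x y : Fin n → ℝ) :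
    qB M x (t • y) = t * qB M x y := by
  simp [qB, Matrix.mulVec_smul, dotProduct_smul, smul_eq_mul]

lemma qB_add_left (M : Matrix (Fin n) (Fin n) ℝ) (x y z : Fin n → ℝ) :
    qB M (x + y) z = qB M x z + qB M y z := by
  simp [qB, add_dotProduct]

lemma qB_smul_left (M : Matrix (Fin n) (Fin n) ℝ) (t : ℝ) (x y : Fin n → ℝ) :
    qB M (t • x) y = t * qB M x y := by
  simp [qB, smul_dotProduct, smul_eq_mul]

lemma qB_sub_left (M : Matrix (Fin n) (Fin n) ℝ) (x y z : Fin n → ℝ) :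
    qB M (x - y) z = qB M x z - qB M y z := by
  simp [qB, sub_dotProduct]

lemma qB_symm (M : Matrix (Fin n) (Fin n) ℝ) (hsym : M.IsSymm) (x y : Fin n → ℝ) :
    qB M x y = qB M y x := by
  have h : y ᵥ* M = M *ᵥ y := by
    rw [← Matrix.mulVec_transpose, hsym.eq]
  rw [qB, qB, Matrix.dotProduct_mulVec y M x, h, dotProduct_comm]

lemma qB_single_right (M : Matrix (Fin n) (Fin n) ℝ) (x : Fin n → ℝ) (i : Fin n) :
    qB M x (Pi.single i 1) = (x ᵥ* M) i := by
  simp [qB, Matrix.mulVec_single, Matrix.vecMul, dotProduct]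

lemma qB_single_single (M : Matrix (Fin n) (Fin n) ℝ) (i j : Fin n) :
    qB M (Pi.single i 1) (Pi.single j 1) = M i j := by
  simp [qB, Matrix.mulVec_single, single_dotProduct]

lemma cont_qB_right (M : Matrix (Fin n) (Fin n) ℝ) (x : Fin n → ℝ) :
    Continuous fun z : Fin n → ℝ => qB M x z := by
  unfold qB Matrix.mulVec dotProduct
  exact continuous_finset_sum _ fun i _ =>
    continuous_const.mul (continuous_finset_sum _ fun j _ =>
      continuous_const.mul (continuous_apply j))

lemma cont_qB_left (M : Matrix (Fin n) (Fin n) ℝ) (x : Fin n → ℝ) :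
    Continuous fun z : Fin n → ℝ => qB M z x := by
  unfold qB Matrix.mulVec dotProduct
  exact continuous_finset_sum _ fun i _ =>
    (continuous_apply i).mul continuous_const

lemma cont_qB_diag (M : Matrix (Fin n) (Fin n) ℝ) :
    Continuous fun z : Fin n → ℝ => qB M z z := by
  unfold qB Matrix.mulVec dotProduct
  exact continuous_finset_sum _ fun i _ =>
    (continuous_apply i).mul (continuous_finset_sum _ fun j _ =>
      continuous_const.mul (continuous_apply j))

lemma ratApprox {n : ℕ} (S : Set (Fin n → ℝ)) (hS : IsOpen S) (x : Fin n → ℝ) (hx : x ∈ S) :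
    ∃ q : Fin n → ℚ, cv q ∈ S := by
  obtain ⟨ε, hε, hball⟩ := Metric.isOpen_iff.mp hS x hx
  have hq : ∀ i, ∃ q : ℚ, |x i - (q : ℝ)| < ε := fun i => exists_rat_near (x i) hε
  choose q hq using hq
  refine ⟨q, hball ?_⟩
  rw [Metric.mem_ball, dist_pi_lt_iff hε]
  intro i
  rw [Real.dist_eq]
  have := hq i
  rw [abs_sub_comm] at this
  exact this

lemma quad_big_neg (a b c : ℝ) (ha : a < 0) :
    ∃ T : ℝ, 1 ≤ T ∧ ∀ t : ℝ, T < t → a * t ^ 2 + b * t + c < 0 := by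
  refine ⟨max 1 ((|b| + |c|) / (-a)), le_max_left _ _, fun t ht => ?_⟩
  have h1 : (1 : ℝ) < t := lt_of_le_of_lt (le_max_left _ _) ht
  have h2 : (|b| + |c|) / (-a) < t := lt_of_le_of_lt (le_max_right _ _) ht
  have h3 : |b| + |c| < t * (-a) := by
    rwa [div_lt_iff₀ (by linarith)] at h2
  nlinarith [le_abs_self b, le_abs_self c, abs_nonneg b, abs_nonneg c]

lemma quad_ne_zero (a b c : ℝ) (hc : c ≠ 0) (T : ℝ) :
    ∃ t : ℝ, T < t ∧ a * t ^ 2 + b * t + c ≠ 0 := by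
  by_contra h
  push_neg at h
  have e1 := h (T + 1) (by linarith)
  have e2 := h (T + 2) (by linarith)
  have e3 := h (T + 3) (by linarith)
  apply hc
  linear_combination ((T + 2) * (T + 3) / 2) * e1 - ((T + 1) * (T + 3)) * e2 +
    ((T + 1) * (T + 2) / 2) * e3

noncomputable def g3 (M : Matrix (Fin n) (Fin n) ℝ) (p q r : Fin n → ℝ) :
    Matrix (Fin 3) (Fin 3) ℝ :=
  !![qB M p p, qB M p q, qB M p r;
     qB M q p, qB M q q, qB M q r;
     qB M r p, qB M r q, qB M r r]

lemma det_g3 (M : Matrix (Fin n) (Fin n) ℝ) (hsym : M.IsSymm) (u w z : Fin n → ℝ) :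
    qB M u u * (g3 M u w z).det =
      qB M u u * (qB M u u * qB M w w - qB M u w ^ 2) * qB M z z
      - (qB M u u * qB M w z - qB M u w * qB M u z) ^ 2
      - (qB M u u * qB M w w - qB M u w ^ 2) * qB M u z ^ 2 := by
  have s1 : qB M w u = qB M u w := qB_symm M hsym w u
  have s2 : qB M z u = qB M u z := qB_symm M hsym z u
  have s3 : qB M z w = qB M w z := qB_symm M hsym z w
  simp only [g3, Matrix.det_fin_three, Matrix.cons_val', Matrix.cons_val_zero,
    Matrix.cons_val_one, Matrix.head_cons, Matrix.head_fin_const, Matrix.cons_val_fin_one,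
    Matrix.empty_val', Matrix.of_apply, Matrix.cons_val_two, Matrix.tail_cons]
  rw [s1, s2, s3]
  ring

lemma vecMul_ne_zero (M : Matrix (Fin n) (Fin n) ℝ) (hdet : M.det ≠ 0) {k : Fin n → ℝ}
    (hk : k ≠ 0) : k ᵥ* M ≠ 0 := by
  intro h
  apply hk
  have h2 : (k ᵥ* M) ᵥ* M⁻¹ = k := by
    rw [Matrix.vecMul_vecMul, Matrix.mul_nonsing_inv _ (isUnit_iff_ne_zero.mpr hdet),
      Matrix.vecMul_one]
  rw [← h2, h, Matrix.zero_vecMul]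

lemma exists_z1 (hn : 3 ≤ n) (M : Matrix (Fin n) (Fin n) ℝ) (hsym : M.IsSymm)
    (hdet : M.det ≠ 0) (u w : Fin n → ℝ) (hc : qB M u u ≠ 0)
    (hk : qB M u u • w - qB M u w • u ≠ 0) :
    ∃ z : Fin n → ℝ, (g3 M u w z).det ≠ 0 := by
  have hbz : ∀ z, qB M (qB M u u • w - qB M u w • u) z
      = qB M u u * qB M w z - qB M u w * qB M u z := by
    intro z
    rw [qB_sub_left, qB_smul_left, qB_smul_left]
  by_cases hd : qB M u u * qB M w w - qB M u w ^ 2 = 0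
  · obtain ⟨i, hi⟩ : ∃ i, ((qB M u u • w - qB M u w • u) ᵥ* M) i ≠ 0 :=
      Function.ne_iff.mp (vecMul_ne_zero M hdet hk)
    refine ⟨Pi.single i 1, fun h0 => hi ?_⟩
    have hD := det_g3 M hsym u w (Pi.single i 1)
    rw [h0, mul_zero, hd] at hD
    have hb0 : qB M u u * qB M w (Pi.single i 1) - qB M u w * qB M u (Pi.single i 1) = 0 := by
      nlinarith [sq_nonneg (qB M u u * qB M w (Pi.single i 1)
        - qB M u w * qB M u (Pi.single i 1))]
    rw [← qB_single_right, hbz, hb0]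
  · by_contra hz
    push_neg at hz
    have key0 : ∀ z, (qB M u u * qB M w z - qB M u w * qB M u z) ^ 2
        + (qB M u u * qB M w w - qB M u w ^ 2) * qB M u z ^ 2
        = qB M u u * (qB M u u * qB M w w - qB M u w ^ 2) * qB M z z := by
      intro z
      have hD := det_g3 M hsym u w z
      rw [hz z, mul_zero] at hD
      linarith
    have pol : ∀ z z', qB M u u * (qB M u u * qB M w w - qB M u w ^ 2) * qB M z z'
        = (qB M u u * qB M w z - qB M u w * qB M u z)
            * (qB M u u * qB M w z' - qB M u w * qB M u z')
          + (qB M u u * qB M w w - qB M u w ^ 2) * (qB M u z * qB M u z') := by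
      intro z z'
      have h1 := key0 (z + z')
      have h2 := key0 z
      have h3 := key0 z'
      have hq : qB M (z + z') (z + z') = qB M z z + 2 * qB M z z' + qB M z' z' := by
        rw [qB_add_left, qB_add_right, qB_add_right, qB_symm M hsym z' z]
        ring
      rw [hq, qB_add_right M w z z', qB_add_right M u z z'] at h1
      linear_combination (h2 + h3 - h1) / 2
    -- build the joint-kernel vector
    let L : (Fin n → ℝ) →ₗ[ℝ] ℝ × ℝ :=
      { toFun := fun z => (qB M u z, qB M w z)
        map_add' := fun x y => by
          simp [qB_add_right, Prod.ext_iff]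
        map_smul' := fun t x => by
          simp [qB_smul_right, Prod.ext_iff, smul_eq_mul] }
    have hker : LinearMap.ker L ≠ ⊥ := by
      apply LinearMap.ker_ne_bot_of_finrank_lt (V₂ := ℝ × ℝ)
      rw [Module.finrank_fin_fun]
      simp only [Module.finrank_prod, Module.finrank_self]
      omega
    obtain ⟨z0, hz0mem, hz0ne⟩ := Submodule.ne_bot_iff _ |>.mp hker
    have hL0 : L z0 = 0 := LinearMap.mem_ker.mp hz0mem
    have ha0 : qB M u z0 = 0 := congrArg Prod.fst hL0
    have hw0 : qB M w z0 = 0 := congrArg Prod.snd hL0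
    have hall : ∀ z', qB M z0 z' = 0 := by
      intro z'
      have hp := pol z0 z'
      rw [ha0, hw0] at hp
      have h4 : qB M u u * (qB M u u * qB M w w - qB M u w ^ 2) * qB M z0 z' = 0 := by
        simpa using hp
      exact (mul_eq_zero.mp h4).resolve_left (mul_ne_zero hc hd)
    apply vecMul_ne_zero M hdet hz0ne
    funext i
    have := hall (Pi.single i 1)
    rw [qB_single_right] at this
    simpa using this


lemma cont_detg3 (M : Matrix (Fin n) (Fin n) ℝ) (u w : Fin n → ℝ) :
    Continuous fun z : Fin n → ℝ => (g3 M u w z).det := by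
  apply Continuous.matrix_det
  apply continuous_matrix
  intro i j
  fin_cases i <;> fin_cases j <;>
    simp only [g3, Matrix.cons_val', Matrix.cons_val_zero, Matrix.cons_val_one, Matrix.head_cons,
      Matrix.empty_val', Matrix.cons_val_fin_one, Matrix.head_fin_const, Matrix.of_apply,
      Matrix.cons_val_two, Matrix.tail_cons] <;>
    first
      | exact continuous_const
      | exact cont_qB_right M _
      | exact cont_qB_left M _
      | exact cont_qB_diag M

lemma exists_good_z (hn : 3 ≤ n) (M : Matrix (Fin n) (Fin n) ℝ) (hsym : M.IsSymm)
    (hdet : M.det ≠ 0) (y : Fin n → ℝ) (hy : qB M y y < 0) (u w : Fin n → ℝ)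
    (hc : qB M u u ≠ 0) (hk : qB M u u • w - qB M u w • u ≠ 0) :
    ∃ z : Fin n → ℚ, (g3 M u w (cv z)).det ≠ 0 ∧ qB M (cv z) (cv z) < 0 := by
  obtain ⟨z1, hz1⟩ := exists_z1 hn M hsym hdet u w hc hk
  have hfd : ∀ t : ℝ, qB M (z1 + t • y) (z1 + t • y)
      = qB M y y * t ^ 2 + (qB M z1 y + qB M y z1) * t + qB M z1 z1 := by
    intro t
    simp only [qB_add_left, qB_add_right, qB_smul_left, qB_smul_right]
    ring
  have hquad : ∀ t : ℝ, qB M u u * (g3 M u w (z1 + t • y)).det =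
      (qB M u u * (qB M u u * qB M w w - qB M u w ^ 2) * qB M y y
        - (qB M u u * qB M w y - qB M u w * qB M u y) ^ 2
        - (qB M u u * qB M w w - qB M u w ^ 2) * qB M u y ^ 2) * t ^ 2
      + (qB M u u * (qB M u u * qB M w w - qB M u w ^ 2) * (qB M z1 y + qB M y z1)
        - 2 * (qB M u u * qB M w z1 - qB M u w * qB M u z1)
            * (qB M u u * qB M w y - qB M u w * qB M u y)
        - 2 * (qB M u u * qB M w w - qB M u w ^ 2) * (qB M u z1 * qB M u y)) * t
      + qB M u u * (g3 M u w z1).det := by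
    intro t
    rw [det_g3 M hsym u w (z1 + t • y), det_g3 M hsym u w z1, hfd t]
    simp only [qB_add_right, qB_smul_right]
    ring
  have hC : qB M u u * (g3 M u w z1).det ≠ 0 := mul_ne_zero hc hz1
  obtain ⟨T, hT1, hTneg⟩ := quad_big_neg (qB M y y) (qB M z1 y + qB M y z1) (qB M z1 z1) hy
  obtain ⟨t, htT, htne⟩ := quad_ne_zero _ _ _ hC T
  have h1 : (g3 M u w (z1 + t • y)).det ≠ 0 := by
    intro h0
    apply htne
    rw [← hquad t, h0, mul_zero]
  have h2 : qB M (z1 + t • y) (z1 + t • y) < 0 := by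
    rw [hfd t]
    exact hTneg t htT
  have hS : IsOpen {z : Fin n → ℝ | (g3 M u w z).det ≠ 0 ∧ qB M z z < 0} := by
    apply IsOpen.inter
    · exact IsOpen.preimage (cont_detg3 M u w) isOpen_compl_singleton
    · exact IsOpen.preimage (cont_qB_diag M) isOpen_Iio
  obtain ⟨z, hz⟩ := ratApprox _ hS (z1 + t • y) ⟨h1, h2⟩
  exact ⟨z, hz.1, hz.2⟩

lemma g3_apply (M : Matrix (Fin n) (Fin n) ℝ) (p q r : Fin n → ℝ) (i j : Fin 3) :
    g3 M p q r i j = qB M (![p, q, r] i) (![p, q, r] j) := by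
  fin_cases i <;> fin_cases j <;> simp [g3]

lemma linIndep_of_det (M : Matrix (Fin n) (Fin n) ℝ) (v : Fin 3 → (Fin n → ℚ))
    (h : (g3 M (cv (v 0)) (cv (v 1)) (cv (v 2))).det ≠ 0) : LinearIndependent ℚ v := by
  rw [Fintype.linearIndependent_iff]
  intro g hg
  set G := g3 M (cv (v 0)) (cv (v 1)) (cv (v 2)) with hGdef
  set gr : Fin 3 → ℝ := fun i => (g i : ℝ) with hgrdef
  have hsum : (g 0 : ℝ) • cv (v 0) + (g 1 : ℝ) • cv (v 1) + (g 2 : ℝ) • cv (v 2) = 0 := by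
    funext l
    have h0 := congrFun hg l
    simp only [Finset.sum_apply, Pi.smul_apply, smul_eq_mul, Fin.sum_univ_three,
      Pi.zero_apply] at h0
    have : ((g 0 * v 0 l + g 1 * v 1 l + g 2 * v 2 l : ℚ) : ℝ) = 0 := by
      rw [h0]; simp
    push_cast at this
    simpa [cv] using this
  have hrow : ∀ p : Fin n → ℝ,
      qB M p (cv (v 0)) * gr 0 + qB M p (cv (v 1)) * gr 1 + qB M p (cv (v 2)) * gr 2 = 0 := by
    intro p
    have h0 : qB M p ((g 0 : ℝ) • cv (v 0) + (g 1 : ℝ) • cv (v 1) + (g 2 : ℝ) • cv (v 2)) = 0 := by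
      rw [hsum]
      simp [qB]
    rw [qB_add_right, qB_add_right, qB_smul_right, qB_smul_right, qB_smul_right] at h0
    simp only [hgrdef]
    linarith
  have hGv : G *ᵥ gr = 0 := by
    funext j
    have hj : (G *ᵥ gr) j = G j 0 * gr 0 + G j 1 * gr 1 + G j 2 * gr 2 := by
      simp [Matrix.mulVec, dotProduct, Fin.sum_univ_three]
    rw [hj, hGdef, g3_apply, g3_apply, g3_apply]
    fin_cases j <;>
      simpa using hrow _
  have hgr0 : gr = 0 := by
    have hG := Matrix.nonsing_inv_mul G (isUnit_iff_ne_zero.mpr h)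
    calc gr = 1 *ᵥ gr := (Matrix.one_mulVec gr).symm
    _ = (G⁻¹ * G) *ᵥ gr := by rw [hG]
    _ = G⁻¹ *ᵥ (G *ᵥ gr) := (Matrix.mulVec_mulVec gr G⁻¹ G).symm
    _ = 0 := by rw [hGv, Matrix.mulVec_zero]
  intro i
  have := congrFun hgr0 i
  simp only [hgrdef, Pi.zero_apply] at this
  exact_mod_cast this

lemma single_qForm (A : Matrix (Fin 3) (Fin 3) ℝ) (i : Fin 3) :
    (Pi.single i 1 : Fin 3 → ℝ) ⬝ᵥ A *ᵥ Pi.single i 1 = A i i := by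
  simp [Matrix.mulVec_single, single_dotProduct]

end Stmt7Aux

open Stmt7Aux in
theorem stmt_7 (n : ℕ) (hn : 3 ≤ n) (M : Matrix (Fin n) (Fin n) ℝ) (hsym : M.IsSymm)
    (hdet : M.det ≠ 0)
    (hindef : (∃ x : Fin n → ℝ, 0 < x ⬝ᵥ M.mulVec x) ∧ (∃ x : Fin n → ℝ, x ⬝ᵥ M.mulVec x < 0))
    (hirr : ¬ ∃ (c : ℝ) (M₀ : Matrix (Fin n) (Fin n) ℚ), c ≠ 0 ∧
      M = c • M₀.map (fun q => (q : ℝ))) :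
    ∃ v : Fin 3 → (Fin n → ℚ), LinearIndependent ℚ v ∧
      ∀ M' : Matrix (Fin 3) (Fin 3) ℝ,
        (M' = fun i j => (fun k => ((v i k : ℝ))) ⬝ᵥ M.mulVec (fun k => ((v j k : ℝ)))) →
        M'.det ≠ 0 ∧
        (∃ x : Fin 3 → ℝ, 0 < x ⬝ᵥ M'.mulVec x) ∧
        (∃ x : Fin 3 → ℝ, x ⬝ᵥ M'.mulVec x < 0) ∧
        ¬ ∃ (c : ℝ) (M₀ : Matrix (Fin 3) (Fin 3) ℚ), c ≠ 0 ∧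
          M' = c • M₀.map (fun q => (q : ℝ)) := by
  classical
  obtain ⟨⟨xp, hxp⟩, ⟨y, hy⟩⟩ := hindef
  by_contra hcon
  push_neg at hcon
  have hSopen : IsOpen {z : Fin n → ℝ | 0 < qB M z z} :=
    IsOpen.preimage (cont_qB_diag M) isOpen_Ioi
  obtain ⟨u₀, hu₀⟩ := ratApprox _ hSopen xp hxp
  have hcpos : 0 < qB M (cv u₀) (cv u₀) := hu₀
  have hcne : qB M (cv u₀) (cv u₀) ≠ 0 := ne_of_gt hcpos
  -- Main claim: every value of the quadratic form at a rational vector is a rational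
  -- multiple of its value at u₀.
  have key : ∀ w : Fin n → ℚ, ∃ q : ℚ,
      qB M (cv w) (cv w) = qB M (cv u₀) (cv u₀) * q := by
    intro w
    by_cases hpar : ∃ t : ℚ, w = t • u₀
    · obtain ⟨t, rfl⟩ := hpar
      refine ⟨t ^ 2, ?_⟩
      have hcv : cv (t • u₀) = (t : ℝ) • cv u₀ := by
        funext i
        simp [cv]
      rw [hcv, qB_smul_left, qB_smul_right]
      push_cast
      ring
    · -- the two vectors are not proportional
      have hkne : qB M (cv u₀) (cv u₀) • cv w - qB M (cv u₀) (cv w) • cv u₀ ≠ 0 := by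
        intro h0
        have hu0ne : cv u₀ ≠ 0 := by
          intro hz
          apply hcne
          rw [hz]
          simp [qB]
        obtain ⟨j, hj⟩ := Function.ne_iff.mp hu0ne
        have hjq : u₀ j ≠ 0 := by
          intro hq
          apply hj
          simp [cv, hq]
        have hju : ((u₀ j : ℝ)) ≠ 0 := by exact_mod_cast hjq
        apply hpar
        refine ⟨w j / u₀ j, ?_⟩
        funext i
        have hi : qB M (cv u₀) (cv u₀) * ((w i : ℝ)) = qB M (cv u₀) (cv w) * ((u₀ i : ℝ)) := by
          have := congrFun h0 i
          simpa [cv, sub_eq_zero] using this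
        have hjj : qB M (cv u₀) (cv u₀) * ((w j : ℝ)) = qB M (cv u₀) (cv w) * ((u₀ j : ℝ)) := by
          have := congrFun h0 j
          simpa [cv, sub_eq_zero] using this
        have hcross : ((w i : ℝ)) * ((u₀ j : ℝ)) = ((w j : ℝ)) * ((u₀ i : ℝ)) := by
          apply mul_left_cancel₀ hcne
          linear_combination ((u₀ j : ℝ)) * hi - ((u₀ i : ℝ)) * hjj
        have hcrossq : w i * u₀ j = w j * u₀ i := by exact_mod_cast hcross
        show w i = (w j / u₀ j) • u₀ i
        rw [smul_eq_mul]
        field_simp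
        linear_combination hcrossq
      obtain ⟨z, hzdet, hzneg⟩ := exists_good_z hn M hsym hdet y hy (cv u₀) (cv w) hcne hkne
      set v : Fin 3 → (Fin n → ℚ) := ![u₀, w, z] with hvdef
      have hdetv : (g3 M (cv (v 0)) (cv (v 1)) (cv (v 2))).det ≠ 0 := by
        show (g3 M (cv u₀) (cv w) (cv z)).det ≠ 0
        exact hzdet
      have hLI := linIndep_of_det M v hdetv
      obtain ⟨M', hM'eq, himp⟩ := hcon v hLI
      have hM'g : M' = g3 M (cv u₀) (cv w) (cv z) := by
        rw [hM'eq]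
        ext i j
        rw [g3_apply]
        fin_cases i <;> fin_cases j <;> simp [hvdef, cv, qB] <;> rfl
      have hdet' : M'.det ≠ 0 := by
        rw [hM'g]
        exact hzdet
      have h00 : M' 0 0 = qB M (cv u₀) (cv u₀) := by
        rw [hM'g]
        simp [g3]
      have h11 : M' 1 1 = qB M (cv w) (cv w) := by
        rw [hM'g]
        simp [g3]
      have h22 : M' 2 2 = qB M (cv z) (cv z) := by
        rw [hM'g]
        simp [g3]
      have hpos' : ∃ x : Fin 3 → ℝ, 0 < x ⬝ᵥ M'.mulVec x := by
        refine ⟨Pi.single 0 1, ?_⟩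
        rw [single_qForm, h00]
        exact hcpos
      have hneg' : ∃ x : Fin 3 → ℝ, x ⬝ᵥ M'.mulVec x < 0 := by
        refine ⟨Pi.single 2 1, ?_⟩
        rw [single_qForm, h22]
        exact hzneg
      obtain ⟨c', N, hc'ne, hMN⟩ := himp hdet' hpos' hneg'
      have e00 : qB M (cv u₀) (cv u₀) = c' * ((N 0 0 : ℝ)) := by
        rw [← h00, hMN]
        simp
      have e11 : qB M (cv w) (cv w) = c' * ((N 1 1 : ℝ)) := by
        rw [← h11, hMN]
        simp
      have hN00 : ((N 0 0 : ℝ)) ≠ 0 := by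
        intro h0
        apply hcne
        rw [e00, h0, mul_zero]
      refine ⟨N 1 1 / N 0 0, ?_⟩
      rw [e11, e00]
      push_cast
      field_simp
  -- conclude that M is a rational multiple of a rational matrix
  have key2 : ∀ i j : Fin n, ∃ q : ℚ, M i j = qB M (cv u₀) (cv u₀) * q := by
    intro i j
    obtain ⟨q1, h1⟩ := key (Pi.single i 1 + Pi.single j 1)
    obtain ⟨q2, h2⟩ := key (Pi.single i 1)
    obtain ⟨q3, h3⟩ := key (Pi.single j 1)
    have hsi : ∀ l : Fin n, cv (Pi.single l (1 : ℚ)) = (Pi.single l 1 : Fin n → ℝ) := by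
      intro l
      funext m
      by_cases hm : m = l <;> simp [cv, Pi.single_apply, hm]
    have hadd : cv (Pi.single i 1 + Pi.single j 1)
        = (Pi.single i 1 : Fin n → ℝ) + Pi.single j 1 := by
      funext m
      by_cases hmi : m = i <;> by_cases hmj : m = j <;>
        simp [cv, Pi.single_apply, hmi, hmj] <;> try (split <;> simp)
    rw [hadd, qB_add_left, qB_add_right, qB_add_right, qB_single_single, qB_single_single,
      qB_single_single, qB_single_single] at h1
    rw [hsi, qB_single_single] at h2
    rw [hsi, qB_single_single] at h3
    have hsymm : M j i = M i j := hsym.apply i j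
    refine ⟨(q1 - q2 - q3) / 2, ?_⟩
    push_cast
    linear_combination (h1 - h2 - h3) / 2 - hsymm / 2
  choose Q hQ using key2
  apply hirr
  refine ⟨qB M (cv u₀) (cv u₀), Matrix.of Q, hcne, ?_⟩
  ext i j
  simp only [Matrix.smul_apply, Matrix.map_apply, Matrix.of_apply, smul_eq_mul]
  exact hQ i j
end

section
/- There exists η ∈ (0,1) depending only on n with the following property: for every real polynomial P of degree ≤ n and all t, θ > 0, if max_{s ∈ [0,t]} |P(s)| = |P(t)| = θ, then θ/2 < |P(s)| ≤ θ for all s ∈ [(1−η)t, t]. -/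
/-!
On the finite-dimensional space of real polynomials of degree `≤ n`, the sup norm on `[0, 1]`
is a norm, so the linear map `Q ↦ Q'` is bounded for it: `sup |Q'| ≤ C · sup |Q|` on `[0, 1]`
(a Markov-type inequality). Rescaling `[0, 1]` to `[0, t]` gives `|P'| ≤ C θ / t` on `[0, t]`,
and the mean value theorem then shows `|P(t) - P(s)| ≤ C θ η < θ / 2` for `s ∈ [(1 - η) t, t]`
once `η = 1 / (2C + 1)`.
-/

open Polynomial Set

theorem LinearMap.exists_norm_le_mul_norm_of_injective {𝕜 V E F : Type*}
    [NontriviallyNormedField 𝕜] [CompleteSpace 𝕜] [AddCommGroup V] [Module 𝕜 V]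
    [FiniteDimensional 𝕜 V] [NormedAddCommGroup E] [NormedSpace 𝕜 E]
    [NormedAddCommGroup F] [NormedSpace 𝕜 F]
    (L : V →ₗ[𝕜] E) (hL : Function.Injective L) (g : V →ₗ[𝕜] F) :
    ∃ C, 0 < C ∧ ∀ v, ‖g v‖ ≤ C * ‖L v‖ := by
  let e := LinearEquiv.ofInjective L hL
  obtain ⟨C, hC, hbound⟩ := (LinearMap.toContinuousLinearMap (g ∘ₗ e.symm.toLinearMap)).bound
  refine ⟨C, hC, fun v => ?_⟩
  simpa [e] using hbound (e v)

theorem Polynomial.toContinuousMapOnAlgHom_injective {R : Type*} [CommRing R] [IsDomain R]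
    [TopologicalSpace R] [IsTopologicalRing R] {X : Set R} (hX : X.Infinite) :
    Function.Injective (toContinuousMapOnAlgHom X) := fun p q hpq =>
  eq_of_infinite_eval_eq p q <| hX.mono fun x hx => by
    simpa using DFunLike.congr_fun hpq ⟨x, hx⟩

theorem exists_abs_derivative_eval_le_of_abs_eval_le_on_Icc_zero_one (n : ℕ) :
    ∃ C, 0 < C ∧ ∀ Q : ℝ[X], Q.natDegree ≤ n → ∀ M, (∀ x ∈ Icc (0 : ℝ) 1, |Q.eval x| ≤ M) →
      ∀ x ∈ Icc (0 : ℝ) 1, |Q.derivative.eval x| ≤ C * M := by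
  let restrict := (toContinuousMapOnAlgHom (Icc (0 : ℝ) 1)).toLinearMap
  let V := degreeLT ℝ (n + 1)
  have hinj : Function.Injective (restrict ∘ₗ V.subtype) :=
    (toContinuousMapOnAlgHom_injective (Icc_infinite zero_lt_one)).comp Subtype.val_injective
  obtain ⟨C, hC, hbound⟩ := LinearMap.exists_norm_le_mul_norm_of_injective _ hinj
    (restrict ∘ₗ derivative ∘ₗ V.subtype)
  refine ⟨C, hC, fun Q hQ M hM x hx => ?_⟩
  have hQV : Q ∈ V := mem_degreeLT.2 <| degree_le_natDegree.trans_lt <| by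
    exact_mod_cast Nat.lt_succ_of_le hQ
  have hM0 : 0 ≤ M := (abs_nonneg _).trans (hM 0 ⟨le_rfl, zero_le_one⟩)
  have hsup : ‖Q.toContinuousMapOn (Icc (0 : ℝ) 1)‖ ≤ M :=
    (ContinuousMap.norm_le _ hM0).2 fun y => hM y y.2
  calc |Q.derivative.eval x| = ‖Q.derivative.toContinuousMapOn (Icc (0 : ℝ) 1) ⟨x, hx⟩‖ := rfl
    _ ≤ ‖Q.derivative.toContinuousMapOn (Icc (0 : ℝ) 1)‖ := ContinuousMap.norm_coe_le_norm _ _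
    _ ≤ C * ‖Q.toContinuousMapOn (Icc (0 : ℝ) 1)‖ := hbound ⟨Q, hQV⟩
    _ ≤ C * M := by gcongr

theorem exists_abs_derivative_eval_le_of_abs_eval_le_on_Icc_zero (n : ℕ) :
    ∃ C, 0 < C ∧ ∀ P : ℝ[X], P.natDegree ≤ n → ∀ t M, 0 < t →
      (∀ s ∈ Icc 0 t, |P.eval s| ≤ M) → ∀ s ∈ Icc 0 t, |P.derivative.eval s| ≤ C * M / t := by
  obtain ⟨C, hC, hmarkov⟩ := exists_abs_derivative_eval_le_of_abs_eval_le_on_Icc_zero_one n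
  refine ⟨C, hC, fun P hP t M ht hM s hs => ?_⟩
  set Q := P.comp (Polynomial.C t * X)
  have hQ : Q.natDegree ≤ n := natDegree_comp_le.trans <| by
    rw [natDegree_C_mul_X t ht.ne', mul_one]; exact hP
  have hQeval (x : ℝ) : Q.eval x = P.eval (t * x) := by simp [Q]
  have hQderiv (x : ℝ) : Q.derivative.eval x = t * P.derivative.eval (t * x) := by
    simp [Q, derivative_comp]
  have hMQ : ∀ x ∈ Icc (0 : ℝ) 1, |Q.eval x| ≤ M := fun x ⟨hx0, hx1⟩ => by
    rw [hQeval]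
    exact hM _ ⟨by positivity, mul_le_of_le_one_right ht.le hx1⟩
  have hst : s / t ∈ Icc (0 : ℝ) 1 :=
    ⟨div_nonneg hs.1 ht.le, (div_le_one ht).2 hs.2⟩
  have := hmarkov Q hQ M hMQ _ hst
  rw [hQderiv, mul_div_cancel₀ _ ht.ne', abs_mul, abs_of_pos ht] at this
  rwa [le_div_iff₀ ht, mul_comm]

theorem stmt_19 (n : ℕ) :
    ∃ η : ℝ, 0 < η ∧ η < 1 ∧
      ∀ P : Polynomial ℝ, P.natDegree ≤ n →
        ∀ t θ : ℝ, 0 < t → 0 < θ →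
          (∀ s ∈ Set.Icc (0 : ℝ) t, |P.eval s| ≤ θ) →
          |P.eval t| = θ →
          ∀ s ∈ Set.Icc ((1 - η) * t) t, θ / 2 < |P.eval s| ∧ |P.eval s| ≤ θ := by
  obtain ⟨C, hC, hmarkov⟩ := exists_abs_derivative_eval_le_of_abs_eval_le_on_Icc_zero n
  set η := (2 * C + 1)⁻¹
  have hη0 : 0 < η := by positivity
  have hη1 : η < 1 := inv_lt_one_of_one_lt₀ (by linarith)
  have hCη : C * η < 1 / 2 := by
    rw [← div_eq_mul_inv, div_lt_iff₀ (by positivity)]; linarith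
  refine ⟨η, hη0, hη1, fun P hP t θ ht hθ hsup hPt s ⟨hs, hst⟩ => ?_⟩
  have hs0 : 0 ≤ s := (mul_nonneg (sub_nonneg.2 hη1.le) ht.le).trans hs
  have hmvt : |P.eval t - P.eval s| ≤ C * θ / t * (t - s) := by
    simpa [abs_of_nonneg (sub_nonneg.2 hst)] using
      (convex_Icc 0 t).norm_image_sub_le_of_norm_deriv_le (f := fun x => P.eval x)
        (fun x _ => P.differentiableAt) (fun x hx => by simpa using hmarkov P hP t θ ht hsup x hx)
        ⟨hs0, hst⟩ ⟨ht.le, le_rfl⟩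
  have hclose : C * θ / t * (t - s) < θ / 2 :=
    calc C * θ / t * (t - s) ≤ C * θ / t * (η * t) := by gcongr; linarith
      _ = C * η * θ := by field_simp
      _ < 1 / 2 * θ := by gcongr
      _ = θ / 2 := by ring
  refine ⟨?_, hsup s ⟨hs0, hst⟩⟩
  linarith [abs_sub_abs_le_abs_sub (P.eval t) (P.eval s)]
end
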